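/- arXiv:2603.22591 — 5 statements merged into one kernel-verified Lean document; each statement's English description precedes it below -/
import Mathlib

section
/- Let P, X, Y be strings and let A = P·X and B = P·Y (concatenation). Then the set of minimal common supersequences of A and B equals { P·Z : Z is a minimal common supersequence of X and Y }. -/
/-!
Write `⊑` for the subsequence order. From `P·X ⊑ S` split `S = S₁·S₂` with `P ⊑ S₁`, `X ⊑ S₂`,
and from `P·Y ⊑ S` split `S = T₁·T₂` with `P ⊑ T₁`, `Y ⊑ T₂`. The suffix belonging to the shorter
prefix contains the other suffix, so it is a common supersequence `Z` of `X` and `Y` with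
`P·Z ⊑ S`. Thus every common supersequence of `P·X` and `P·Y` contains one of the form `P·Z`, and
since `P·Z ⊑ P·Z'` iff `Z ⊑ Z'`, minimality transfers in both directions.
-/

/-- `C` is a common supersequence of `A` and `B`. -/
def IsCommonSupseq {α : Type*} (A B C : List α) : Prop :=
  A.Sublist C ∧ B.Sublist C

/-- `C` is a minimal common supersequence of `A` and `B`. -/
def IsMinimalCommonSupseq {α : Type*} (A B C : List α) : Prop :=
  IsCommonSupseq A B C ∧ ∀ C', C'.Sublist C → C' ≠ C → ¬ IsCommonSupseq A B C'

section CommonSupseq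

variable {α : Type*} {A B C C' P X Y Z S : List α}

theorem isCommonSupseq_append_left_iff :
    IsCommonSupseq (P ++ X) (P ++ Y) (P ++ Z) ↔ IsCommonSupseq X Y Z := by
  simp only [IsCommonSupseq, List.append_sublist_append_left]

theorem IsCommonSupseq.exists_append_sublist (h : IsCommonSupseq (P ++ X) (P ++ Y) S) :
    ∃ Z, IsCommonSupseq X Y Z ∧ (P ++ Z).Sublist S := by
  obtain ⟨S₁, S₂, rfl, hP₁, hX⟩ := List.append_sublist_iff.mp h.1
  obtain ⟨T₁, T₂, hST, hP₂, hY⟩ := List.append_sublist_iff.mp h.2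
  rcases List.append_eq_append_iff.mp hST with ⟨U, -, rfl⟩ | ⟨U, rfl, rfl⟩
  · exact ⟨U ++ T₂, ⟨hX, hY.trans (List.sublist_append_right U T₂)⟩, hP₁.append_right _⟩
  · refine ⟨U ++ S₂, ⟨hX.trans (List.sublist_append_right U S₂), hY⟩, ?_⟩
    simpa only [List.append_assoc] using hP₂.append_right (U ++ S₂)

theorem IsMinimalCommonSupseq.eq_of_sublist (h : IsMinimalCommonSupseq A B C)
    (hC' : C'.Sublist C) (hcs : IsCommonSupseq A B C') : C' = C :=
  by_contra fun hne => h.2 C' hC' hne hcs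

theorem IsMinimalCommonSupseq.exists_eq_append (h : IsMinimalCommonSupseq (P ++ X) (P ++ Y) S) :
    ∃ Z, IsMinimalCommonSupseq X Y Z ∧ P ++ Z = S := by
  obtain ⟨Z, hZ, hPZ⟩ := h.1.exists_append_sublist
  have hS : P ++ Z = S := h.eq_of_sublist hPZ (isCommonSupseq_append_left_iff.mpr hZ)
  refine ⟨Z, ⟨hZ, fun Z' hZ' hne hcs => hne ?_⟩, hS⟩
  have hPZ' : (P ++ Z').Sublist S := hS ▸ (List.append_sublist_append_left P).mpr hZ'
  exact List.append_cancel_left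
    ((h.eq_of_sublist hPZ' (isCommonSupseq_append_left_iff.mpr hcs)).trans hS.symm)

theorem IsMinimalCommonSupseq.append_left (h : IsMinimalCommonSupseq X Y Z) :
    IsMinimalCommonSupseq (P ++ X) (P ++ Y) (P ++ Z) := by
  refine ⟨isCommonSupseq_append_left_iff.mpr h.1, fun C' hC' hne hcs => hne ?_⟩
  obtain ⟨W, hW, hPW⟩ := hcs.exists_append_sublist
  have hWZ : W = Z :=
    h.eq_of_sublist ((List.append_sublist_append_left P).mp (hPW.trans hC')) hW
  exact hC'.antisymm (hWZ ▸ hPW)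

end CommonSupseq

/-- If `A = P·X` and `B = P·Y`, then the minimal common supersequences of
`A` and `B` are exactly the strings `P·Z` where `Z` is a minimal common
supersequence of `X` and `Y`. -/
theorem stmt_8 {α : Type*} (P X Y : List α) :
    {S | IsMinimalCommonSupseq (P ++ X) (P ++ Y) S} =
      (fun Z => P ++ Z) '' {Z | IsMinimalCommonSupseq X Y Z} := by
  ext S
  constructor
  · exact fun h => h.exists_eq_append
  · rintro ⟨Z, hZ, rfl⟩
    exact hZ.append_left
end

section
/- Let P, X, Y be strings, A = P·X and B = P·Y. Then every minimal common supersequence of A and B has P as a prefix. -/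
/-! A minimal common supersequence cannot begin with a letter that is useless to both strings:
deleting it would leave a smaller common supersequence. So a minimal common supersequence of
`p·A` and `p·B` begins with `p`, and stripping that `p` leaves a minimal common supersequence
of `A` and `B`; induction on `P` finishes the proof. -/

namespace IsMinimalCommonSupseq

variable {α : Type*} {a b s : α} {A B S : List α}

theorem ne_nil (h : IsMinimalCommonSupseq (a :: A) B S) : S ≠ [] := by
  rintro rfl
  exact List.cons_ne_nil a A (List.sublist_nil.mp h.1.1)

theorem head_eq_or_eq (h : IsMinimalCommonSupseq (a :: A) (b :: B) (s :: S)) :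
    s = a ∨ s = b := by
  obtain ⟨⟨hA, hB⟩, hmin⟩ := h
  by_contra! hne
  refine hmin S (List.sublist_cons_self s S) (List.cons_ne_self s S).symm ⟨?_, ?_⟩
  · exact (List.sublist_cons_iff.mp hA).resolve_right (by grind)
  · exact (List.sublist_cons_iff.mp hB).resolve_right (by grind)

theorem of_cons_cons (h : IsMinimalCommonSupseq (a :: A) (a :: B) (a :: S)) :
    IsMinimalCommonSupseq A B S := by
  obtain ⟨⟨hA, hB⟩, hmin⟩ := h
  refine ⟨⟨List.cons_sublist_cons.mp hA, List.cons_sublist_cons.mp hB⟩, ?_⟩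
  rintro C hC hne ⟨hAC, hBC⟩
  exact hmin (a :: C) (hC.cons_cons a) (by simpa using hne) ⟨hAC.cons_cons a, hBC.cons_cons a⟩

end IsMinimalCommonSupseq

/-- Every minimal common supersequence of `P·X` and `P·Y` has `P` as a prefix. -/
theorem stmt_9 {α : Type*} (P X Y S : List α)
    (h : IsMinimalCommonSupseq (P ++ X) (P ++ Y) S) :
    P <+: S := by
  induction P generalizing S with
  | nil => exact List.nil_prefix
  | cons p P ih =>
    obtain ⟨s, S, rfl⟩ := List.exists_cons_of_ne_nil h.ne_nil
    obtain rfl : s = p := h.head_eq_or_eq.elim id id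
    exact List.cons_prefix_cons.mpr ⟨rfl, ih S h.of_cons_cons⟩
end

section
/- A string S is a minimal common supersequence of strings A and B if and only if there exist an integer l ≥ 1 and decompositions A = A₁·A₂·⋯·A_l, B = B₁·B₂·⋯·B_l and S = S₁·S₂·⋯·S_l into consecutive (possibly empty) blocks such that for every i ∈ {1,…,l}: (1) the block A_i fills S_i in context (A₁⋯A_{i−1}, A_{i+1}⋯A_l), and the block B_i fills S_i in context (B₁⋯B_{i−1}, B_{i+1}⋯B_l); and (2) S_i = A_i or S_i = B_i (equality of strings). -/
/-- For a string written as a concatenation `P ++ M ++ Q`, the block `M` fills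
`T` in context `(P, Q)`: `M` is a subsequence of `T`; if `P` is nonempty with
last character `c`, then `c·M` is not a subsequence of `T`; and if `Q` is
nonempty with first character `d`, then `M·d` is not a subsequence of `T`. -/
def FillsBlock {α : Type*} (P M Q T : List α) : Prop :=
  M.Sublist T ∧
  (∀ c, P.getLast? = some c → ¬ (c :: M).Sublist T) ∧
  (∀ d, Q.head? = some d → ¬ (M ++ [d]).Sublist T)


/-!
A block `M` fills `T` in context `(P, Q)` when `M` sits in `T` both as far left as possible
(`M·d` does not fit) and as far right as possible (`c·M` does not fit). These extremal
embeddings compose: if the blocks of `A` fill the blocks of `S`, then `A` fills `S` as a whole,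
and any embedding of `A` into `S` can be pushed, block by block, past the blocks before a given
one. So if a letter is deleted from a block `Sᵢ = Aᵢ`, the rest of `Sᵢ` would have to hold `Aᵢ`
together with the tail of `A`, which is impossible. Minimality need only be tested on single
deletions.

Conversely, let `S = s·S'` be a common supersequence from which no letter can be deleted. One
of the strings, say `A`, does not embed in `S'`, so it begins with `s`. The first block
`S₁ = A₁` is the common prefix of `A` and `S`, extended until the rest of `A` embeds in the rest
of `S` even with its first letter skipped; `B₁` is the shortest prefix of `B` whose remainder
embeds in the rest of `S`. If `B₁` followed by the next letter of `B` fitted into `S₁`, the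
first letter after `S₁` could be deleted. What remains of `S` is again irredundant for what
remains of `A` and `B`, now preceded by the last letters of `A₁` and `B₁`, so induction on `|S|`
gives the other blocks. The invariant carried along is `FillsBlock P A [] S`: `A` fills all of
`S` after `P`.
-/

namespace List

variable {α : Type*} {X Y T U : List α} {y : α}

theorem cons_sublist_of_append_sublist_append (h : X ++ y :: Y <+ T ++ U)
    (hX : ¬ X ++ [y] <+ T) : y :: Y <+ U := by
  obtain ⟨L₁, L₂, hL, h₁, h₂⟩ := sublist_append_iff.1 h
  rcases append_eq_append_iff.1 hL with ⟨Z, rfl, hZ⟩ | ⟨Z, rfl, rfl⟩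
  · rcases cons_eq_append_iff.1 hZ with ⟨rfl, rfl⟩ | ⟨Z, rfl, -⟩
    · exact h₂
    · exact absurd (Sublist.trans (by simp) h₁) hX
  · exact (sublist_append_right Z _).trans h₂

theorem append_singleton_sublist_of_append_sublist_append (h : Y ++ [y] ++ X <+ U ++ T)
    (hX : ¬ y :: X <+ T) : Y ++ [y] <+ U := by
  have h' : X.reverse ++ y :: Y.reverse <+ T.reverse ++ U.reverse := by simpa using h.reverse
  have hX' : ¬ X.reverse ++ [y] <+ T.reverse := fun h => hX (by simpa using h.reverse)
  simpa using (cons_sublist_of_append_sublist_append h' hX').reverse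

theorem Sublist.exists_eq_append_cons_of_ne (h : X <+ T) (hne : X ≠ T) :
    ∃ U x V, T = U ++ x :: V ∧ X <+ U ++ V := by
  induction h with
  | slnil => exact absurd rfl hne
  | cons a h _ => exact ⟨[], a, _, rfl, h⟩
  | cons_cons a _ ih =>
    obtain ⟨U, x, V, rfl, hX⟩ := ih fun h => hne (h ▸ rfl)
    exact ⟨a :: U, x, V, rfl, hX.cons_cons a⟩

theorem exists_of_append_eq_append_cons {L V : List α} {x : α} (h : T ++ L = U ++ x :: V) :
    (∃ W, U = T ++ W ∧ L = W ++ x :: V) ∨ ∃ W, T = U ++ x :: W ∧ V = W ++ L := by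
  rcases append_eq_append_iff.1 h with ⟨W, hU, hL⟩ | ⟨W, rfl, hW⟩
  · exact .inl ⟨W, hU, hL⟩
  · rcases cons_eq_append_iff.1 hW with ⟨rfl, hL⟩ | ⟨W, rfl, rfl⟩
    · exact .inl ⟨[], by simp, by simp [hL]⟩
    · exact .inr ⟨W, by simp, rfl⟩

end List

open List

section FillsBlock

variable {α : Type*} {P M Q T U : List α}

theorem fillsBlock_self (P M Q : List α) : FillsBlock P M Q M :=
  ⟨Sublist.refl M, fun _ _ h => by simpa using h.length_le,
    fun _ _ h => by simpa using h.length_le⟩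

theorem fillsBlock_append_left {p : List α} (hp : p ≠ []) :
    FillsBlock (P ++ p) M Q T ↔ FillsBlock p M Q T := by
  simp only [FillsBlock, getLast?_append_of_ne_nil _ hp]

theorem FillsBlock.sublist_of_append_sublist_append (h : FillsBlock P M Q T)
    (hs : M ++ Q <+ T ++ U) : Q <+ U := by
  cases Q with
  | nil => exact nil_sublist U
  | cons d Q => exact cons_sublist_of_append_sublist_append hs (h.2.2 d rfl)

theorem FillsBlock.append (h : FillsBlock P M Q T) (h' : FillsBlock (P ++ M) Q [] U) :
    FillsBlock P (M ++ Q) [] (T ++ U) := by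
  refine ⟨h.1.append h'.1, fun c hc hs => h.2.1 c hc ?_, by simp⟩
  have hK := dropLast_append_getLast (cons_ne_nil c M)
  have hlast : (P ++ M).getLast? = some ((c :: M).getLast (cons_ne_nil c M)) := by
    rw [← getLast?_eq_some_getLast, getLast?_append, hc, ← singleton_append, getLast?_append]
    rfl
  rw [← hK]
  exact append_singleton_sublist_of_append_sublist_append (by rwa [hK]) (h'.2.1 _ hlast)

theorem FillsBlock.not_sublist_of_erase {x : α} {V : List α} (h : FillsBlock (x :: V) Q [] U)
    (W : List α) :
    ¬ W ++ x :: V ++ Q <+ W ++ V ++ U := by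
  intro hs
  rw [append_assoc, append_assoc, append_sublist_append_left] at hs
  have hK := dropLast_append_getLast (cons_ne_nil x V)
  rw [← hK] at hs
  have := (append_singleton_sublist_of_append_sublist_append hs
    (h.2.1 _ (getLast?_eq_some_getLast _))).length_le
  rw [hK] at this
  simp at this

theorem exists_common_prefix_block {t : α} {A S : List α} (hA : A <+ S) (hown : ¬ t :: A <+ S) :
    ∃ p A' S', p ≠ [] ∧ t :: A = p ++ A' ∧ t :: S = p ++ S' ∧ FillsBlock p A' [] S' ∧
      A' <+ S'.tail := by
  induction S generalizing t A with
  | nil => exact ⟨[t], A, [], by simp, rfl, rfl, ⟨hA, by simp, by simp⟩, hA⟩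
  | cons t' S ih =>
    by_cases hA' : A <+ S
    · exact ⟨[t], A, t' :: S, by simp, rfl, rfl, ⟨hA, by simpa using hown, by simp⟩, hA'⟩
    obtain ⟨A, rfl, hAS⟩ := (sublist_cons_iff.1 hA).resolve_left hA'
    obtain ⟨p, A', S', hp, hpA, hpS, hfill, htail⟩ := ih hAS hA'
    exact ⟨t :: p, A', S', by simp, by rw [hpA]; rfl, by rw [hpS]; rfl,
      (fillsBlock_append_left hp (P := [t])).2 hfill, htail⟩

theorem FillsBlock.exists_split_append {R B p S : List α} (hB : FillsBlock R B [] (p ++ S)) :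
    ∃ b B', B = b ++ B' ∧ b <+ p ∧ FillsBlock (R ++ b) B' [] S := by
  obtain ⟨X, Y, rfl, hX, hY⟩ := sublist_append_iff.1 hB.1
  induction X using List.reverseRecOn generalizing Y with
  | nil =>
    refine ⟨[], Y, rfl, nil_sublist p, hY, fun c hc hcY => ?_, by simp⟩
    exact hB.2.1 c (by simpa using hc) (by simpa using hcY.trans (sublist_append_right p S))
  | append_singleton X x ih =>
    by_cases hxY : x :: Y <+ S
    · obtain ⟨b, B', hb, hbp, hfill⟩ :=
        ih (x :: Y) (by simpa using hB) ((sublist_append_left X [x]).trans hX) hxY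
      exact ⟨b, B', by simp [← hb], hbp, hfill⟩
    · exact ⟨X ++ [x], Y, rfl, hX, hY, by simpa using hxY, by simp⟩

end FillsBlock

namespace MinimalCommonSupseq

variable {α : Type*}

def IsIrredundant (A B S : List α) : Prop :=
  ∀ U x V, S = U ++ x :: V → ¬ IsCommonSupseq A B (U ++ V)

def FillsBlocks : List α → List (List α) → List (List α) → Prop
  | _, [], [] => True
  | P, M :: Ms, T :: Ts => FillsBlock P M Ms.flatten T ∧ FillsBlocks (P ++ M) Ms Ts
  | _, _, _ => False

theorem isMinimalCommonSupseq_iff {A B S : List α} :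
    IsMinimalCommonSupseq A B S ↔ IsCommonSupseq A B S ∧ IsIrredundant A B S := by
  refine and_congr_right fun _ => ⟨fun h U x V hS => h _ ?_ ?_, fun h C hC hne hCS => ?_⟩
  · simp [hS]
  · intro hUV
    simpa [hS] using congrArg length hUV
  · obtain ⟨U, x, V, hS, hCUV⟩ := hC.exists_eq_append_cons_of_ne hne
    exact h U x V hS ⟨hCS.1.trans hCUV, hCS.2.trans hCUV⟩

theorem IsIrredundant.symm {A B S : List α} (h : IsIrredundant A B S) : IsIrredundant B A S :=
  fun U x V hS hC => h U x V hS hC.symm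

theorem IsIrredundant.of_append {M N T A B S : List α}
    (h : IsIrredundant (M ++ A) (N ++ B) (T ++ S))
    (hM : M <+ T) (hN : N <+ T) : IsIrredundant A B S := by
  rintro U x V rfl ⟨hA, hB⟩
  exact h (T ++ U) x V (by simp) ⟨by simpa using hM.append hA, by simpa using hN.append hB⟩

theorem IsIrredundant.not_append_singleton_sublist {M N T A B S : List α}
    (h : IsIrredundant (M ++ A) (N ++ B) (T ++ S)) (hM : M <+ T) (hA : A <+ S.tail)
    (hB : B <+ S) : ∀ d, B.head? = some d → ¬ N ++ [d] <+ T := by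
  intro d hd hN
  -- otherwise the first letter of `S` could be deleted
  obtain ⟨B, rfl⟩ := head?_eq_some_iff.1 hd
  obtain ⟨x, S, rfl⟩ : ∃ x S', S = x :: S' := by
    cases S with
    | nil => simp at hB
    | cons x S => exact ⟨x, S, rfl⟩
  exact h T x S rfl ⟨hM.append hA, by simpa using hN.append hB.tail⟩

theorem exists_first_block {R A B S : List α} {s : α} (hA : A <+ s :: S)
    (hB : FillsBlock R B [] (s :: S)) (hmin : IsIrredundant A B (s :: S)) (hown : ¬ A <+ S) :
    ∃ p A' b B' S', p ≠ [] ∧ A = p ++ A' ∧ B = b ++ B' ∧ s :: S = p ++ S' ∧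
      FillsBlock R b B' p ∧ FillsBlock p A' [] S' ∧ FillsBlock (R ++ b) B' [] S' := by
  obtain ⟨A₀, rfl, hA₀⟩ := (sublist_cons_iff.1 hA).resolve_left hown
  obtain ⟨p, A', S', hp, hpA, hpS, hA', htail⟩ := exists_common_prefix_block hA₀ hown
  rw [hpA, hpS] at hmin
  rw [hpS] at hB
  obtain ⟨b, B', rfl, hbp, hB'⟩ := hB.exists_split_append
  refine ⟨p, A', b, B', S', hp, hpA, rfl, hpS, ⟨hbp, fun c hc hcb => ?_,
    hmin.not_append_singleton_sublist (Sublist.refl p) htail hB'.1⟩, hA', hB'⟩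
  exact hB.2.1 c hc (by simpa using hcb.append hB'.1)

theorem exists_blocks_of_isIrredundant {P R A B S : List α} (hA : FillsBlock P A [] S)
    (hB : FillsBlock R B [] S) (hmin : IsIrredundant A B S) :
    ∃ As Bs Ss : List (List α), As.flatten = A ∧ Bs.flatten = B ∧ Ss.flatten = S ∧
      FillsBlocks P As Ss ∧ FillsBlocks R Bs Ss ∧
      ∀ i < Ss.length, Ss[i]! = As[i]! ∨ Ss[i]! = Bs[i]! := by
  match S with
  | [] =>
    obtain rfl := sublist_nil.1 hA.1
    obtain rfl := sublist_nil.1 hB.1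
    exact ⟨[], [], [], rfl, rfl, rfl, trivial, trivial, by simp⟩
  | s :: S =>
    wlog hown : ¬ A <+ S generalizing P R A B with H
    · have hownB : ¬ B <+ S := fun hBS => hmin [] s S rfl ⟨not_not.1 hown, hBS⟩
      obtain ⟨Bs, As, Ss, hBs, hAs, hSs, hB', hA', hor⟩ := H hB hA hmin.symm hownB
      exact ⟨As, Bs, Ss, hAs, hBs, hSs, hA', hB', fun i hi => (hor i hi).symm⟩
    obtain ⟨p, A', b, B', S', hp, rfl, rfl, hS, hbp, hA', hB'⟩ :=
      exists_first_block hA.1 hB hmin hown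
    have hlen : S'.length < (s :: S).length := by
      rw [hS, length_append]
      exact Nat.lt_add_of_pos_left (length_pos_of_ne_nil hp)
    rw [hS] at hmin
    obtain ⟨As, Bs, Ss, rfl, rfl, rfl, hAs, hBs, hor⟩ :=
      exists_blocks_of_isIrredundant ((fillsBlock_append_left hp).2 hA') hB'
        (hmin.of_append (Sublist.refl p) hbp.1)
    refine ⟨p :: As, b :: Bs, p :: Ss, by simp, by simp, by simp [hS],
      ⟨fillsBlock_self _ _ _, hAs⟩, ⟨hbp, hBs⟩, ?_⟩
    rintro (_ | i) hi
    · simp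
    · simpa using hor i (by simpa using hi)
termination_by S.length
decreasing_by all_goals assumption

theorem FillsBlocks.fillsBlock_flatten {P : List α} {As Ss : List (List α)}
    (h : FillsBlocks P As Ss) : FillsBlock P As.flatten [] Ss.flatten := by
  induction As generalizing P Ss with
  | nil => cases Ss with
    | nil => exact fillsBlock_self P [] []
    | cons => exact h.elim
  | cons M Ms ih => cases Ss with
    | nil => exact h.elim
    | cons T Ts => exact FillsBlock.append h.1 (ih h.2)

theorem FillsBlocks.not_sublist_of_erase_head {P M U V : List α} {x : α}
    {Ms Ts : List (List α)} (h : FillsBlocks P (M :: Ms) (M :: Ts)) (hM : M = U ++ x :: V) :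
    ¬ (M :: Ms).flatten <+ U ++ V ++ Ts.flatten := by
  have hfill := h.2.fillsBlock_flatten
  subst hM
  rw [← append_assoc, fillsBlock_append_left (cons_ne_nil x V)] at hfill
  simpa using hfill.not_sublist_of_erase U

theorem isIrredundant_flatten {P R : List α} {As Bs Ss : List (List α)}
    (hA : FillsBlocks P As Ss) (hB : FillsBlocks R Bs Ss)
    (hor : ∀ i < Ss.length, Ss[i]! = As[i]! ∨ Ss[i]! = Bs[i]!) :
    IsIrredundant As.flatten Bs.flatten Ss.flatten := by
  induction Ss generalizing P R As Bs with
  | nil => exact fun U x V h => by simp at h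
  | cons T Ts ih =>
    obtain ⟨M, Ms, rfl⟩ : ∃ M Ms, As = M :: Ms := by
      cases As with
      | nil => exact hA.elim
      | cons M Ms => exact ⟨M, Ms, rfl⟩
    obtain ⟨N, Ns, rfl⟩ : ∃ N Ns, Bs = N :: Ns := by
      cases Bs with
      | nil => exact hB.elim
      | cons N Ns => exact ⟨N, Ns, rfl⟩
    simp only [length_cons, Nat.forall_lt_succ_left, getElem!_cons_zero, getElem!_cons_succ] at hor
    intro U x V hS ⟨hAS, hBS⟩
    rw [flatten_cons] at hS
    rcases exists_of_append_eq_append_cons hS with ⟨W, rfl, hW⟩ | ⟨W, rfl, rfl⟩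
    · refine ih hA.2 hB.2 hor.2 W x V hW ⟨?_, ?_⟩
      · exact FillsBlock.sublist_of_append_sublist_append hA.1 (by simpa using hAS)
      · exact FillsBlock.sublist_of_append_sublist_append hB.1 (by simpa using hBS)
    · rcases hor.1 with rfl | rfl
      · exact hA.not_sublist_of_erase_head rfl (by simpa using hAS)
      · exact hB.not_sublist_of_erase_head rfl (by simpa using hBS)

theorem fillsBlocks_iff {P : List α} {As Ss : List (List α)} :
    FillsBlocks P As Ss ↔ As.length = Ss.length ∧ ∀ i < Ss.length,
      FillsBlock (P ++ (As.take i).flatten) As[i]! (As.drop (i + 1)).flatten Ss[i]! := by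
  induction As generalizing P Ss with
  | nil => cases Ss <;> simp [FillsBlocks]
  | cons M Ms ih =>
    cases Ss with
    | nil => simp [FillsBlocks]
    | cons T Ts =>
      simp only [FillsBlocks, ih, length_cons, Nat.add_right_cancel_iff, Nat.forall_lt_succ_left]
      simp [and_left_comm]

end MinimalCommonSupseq

open MinimalCommonSupseq in
/-- `S` is a minimal common supersequence of `A` and `B` iff `A`, `B`, `S` admit
block decompositions `A = A₁⋯A_l`, `B = B₁⋯B_l`, `S = S₁⋯S_l` (`l ≥ 1`) such
that each `A_i` and each `B_i` fills `S_i` in its context, and each `S_i`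
equals `A_i` or `B_i`. -/
theorem stmt_10 {α : Type*} (A B S : List α) :
    IsMinimalCommonSupseq A B S ↔
      ∃ l : ℕ, 1 ≤ l ∧ ∃ As Bs Ss : List (List α),
        As.length = l ∧ Bs.length = l ∧ Ss.length = l ∧
        A = As.flatten ∧ B = Bs.flatten ∧ S = Ss.flatten ∧
        ∀ i, i < l →
          FillsBlock ((As.take i).flatten) As[i]! ((As.drop (i + 1)).flatten) Ss[i]! ∧
          FillsBlock ((Bs.take i).flatten) Bs[i]! ((Bs.drop (i + 1)).flatten) Ss[i]! ∧
          (Ss[i]! = As[i]! ∨ Ss[i]! = Bs[i]!) := by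
  rw [isMinimalCommonSupseq_iff]
  constructor
  · rintro ⟨⟨hA, hB⟩, hmin⟩
    obtain ⟨As, Bs, Ss, rfl, rfl, rfl, hAs, hBs, hor⟩ :=
      exists_blocks_of_isIrredundant (P := []) (R := []) ⟨hA, by simp, by simp⟩
        ⟨hB, by simp, by simp⟩ hmin
    -- a leading empty block makes `l ≥ 1`
    have hAs' : FillsBlocks [] ([] :: As) ([] :: Ss) := ⟨fillsBlock_self _ _ _, hAs⟩
    have hBs' : FillsBlocks [] ([] :: Bs) ([] :: Ss) := ⟨fillsBlock_self _ _ _, hBs⟩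
    obtain ⟨hAl, hAi⟩ := fillsBlocks_iff.1 hAs'
    obtain ⟨hBl, hBi⟩ := fillsBlocks_iff.1 hBs'
    refine ⟨Ss.length + 1, by omega, [] :: As, [] :: Bs, [] :: Ss, hAl, hBl, rfl,
      by simp, by simp, by simp,
      fun i hi => ⟨by simpa using hAi i hi, by simpa using hBi i hi, ?_⟩⟩
    cases i with
    | zero => simp
    | succ i => simpa using hor i (by simpa using hi)
  · rintro ⟨l, -, As, Bs, Ss, hAl, hBl, hSl, rfl, rfl, rfl, h⟩
    subst hSl
    have hAs := fillsBlocks_iff (P := []).2 ⟨hAl, fun i hi => by simpa using (h i hi).1⟩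
    have hBs := fillsBlocks_iff (P := []).2 ⟨hBl, fun i hi => by simpa using (h i hi).2.1⟩
    exact ⟨⟨hAs.fillsBlock_flatten.1, hBs.fillsBlock_flatten.1⟩,
      isIrredundant_flatten hAs hBs fun i hi => (h i hi).2.2⟩
end

section
/- Let A = P·M₁·M₂·Q be a string written as a concatenation of (possibly empty) blocks and let T₁, T₂ be strings. If M₁ fills T₁ in context (P, M₂·Q) and M₂ fills T₂ in context (P·M₁, Q), then M₁·M₂ fills T₁·T₂ in context (P, Q). -/
/-- If `M₁` fills `T₁` in context `(P, M₂·Q)` and `M₂` fills `T₂` in context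
`(P·M₁, Q)` (inside `A = P·M₁·M₂·Q`), then `M₁·M₂` fills `T₁·T₂` in
context `(P, Q)`. -/
theorem stmt_13 {α : Type*} (P M₁ M₂ Q T₁ T₂ : List α)
    (h1 : FillsBlock P M₁ (M₂ ++ Q) T₁)
    (h2 : FillsBlock (P ++ M₁) M₂ Q T₂) :
    FillsBlock P (M₁ ++ M₂) Q (T₁ ++ T₂) := by
  obtain ⟨h1s, h1l, h1r⟩ := h1
  obtain ⟨h2s, h2l, h2r⟩ := h2
  refine ⟨h1s.append h2s, ?_, ?_⟩
  · -- left context condition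
    intro c hc hsub
    have hrw : (c :: M₁) ++ M₂ = c :: (M₁ ++ M₂) := rfl
    rw [← hrw, List.sublist_append_iff] at hsub
    obtain ⟨L₁, L₂, heq, hL₁, hL₂⟩ := hsub
    rcases List.append_eq_append_iff.mp heq.symm with ⟨s, hs1, hs2⟩ | ⟨a', ha1, ha2⟩
    · rcases eq_or_ne s [] with rfl | hsne
      · simp only [List.append_nil] at hs1
        exact h1l c hc (hs1 ▸ hL₁)
      · -- s is a nonempty suffix of c :: M₁
        set e := s.getLast hsne with he
        have hsplit : s.dropLast ++ [e] = s := List.dropLast_append_getLast hsne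
        -- last of (c :: M₁) is e
        have hlast : (c :: M₁).getLast? = some e := by
          rw [hs1, List.getLast?_append, ← hsplit, List.getLast?_concat]
          rfl
        -- (P ++ M₁).getLast? = some e
        have hPM : (P ++ M₁).getLast? = some e := by
          have h' : (c :: M₁) = [c] ++ M₁ := rfl
          rw [h', List.getLast?_append] at hlast
          rw [List.getLast?_append, hc]
          simpa using hlast
        -- e :: M₂ is a sublist of T₂
        have hfin : (e :: M₂).Sublist T₂ := by
          have h' : (e :: M₂).Sublist (s ++ M₂) := by
            rw [← hsplit, List.append_assoc]
            exact List.sublist_append_right _ _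
          exact h'.trans (hs2 ▸ hL₂)
        exact h2l e hPM hfin
    · -- L₁ contains all of c :: M₁
      exact h1l c hc (((c :: M₁).sublist_append_left a').trans (ha1 ▸ hL₁))
  · -- right context condition
    intro d hd hsub
    rw [List.append_assoc, List.sublist_append_iff] at hsub
    obtain ⟨L₁, L₂, heq, hL₁, hL₂⟩ := hsub
    rcases List.append_eq_append_iff.mp heq.symm with ⟨s, hs1, hs2⟩ | ⟨t, ht1, ht2⟩
    · -- L₂ contains all of M₂ ++ [d]
      have h' : (M₂ ++ [d]).Sublist L₂ := hs2 ▸ List.sublist_append_right s _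
      exact h2r d hd (h'.trans hL₂)
    · rcases eq_or_ne t [] with rfl | htne
      · simp only [List.nil_append] at ht2
        exact h2r d hd (ht2 ▸ hL₂)
      · -- t is a nonempty prefix of M₂ ++ [d]
        obtain ⟨f, t', rfl⟩ := List.exists_cons_of_ne_nil htne
        have hhead : (M₂ ++ [d]).head? = some f := by
          rw [ht2]; rfl
        have hMQ : (M₂ ++ Q).head? = some f := by
          rw [List.head?_append, hd]
          rw [List.head?_append] at hhead
          simpa using hhead
        have hfin : (M₁ ++ [f]).Sublist T₁ :=
          (((List.nil_sublist t').cons_cons f).append_left M₁).trans (ht1 ▸ hL₁)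
        exact h1r f hMQ hfin
end

section
/- Let X be a nonempty string, Y a string, x an integer with 0 ≤ x ≤ |X|, and y, y' integers with 1 ≤ y ≤ y' < |Y|. Write t = l_{X,Y}(x,y,y'). Then l_{X,Y}(x,y,y'+1) = t + 1 if t < |X| and X[t] = Y[y'+1], and l_{X,Y}(x,y,y'+1) = t otherwise. -/
/-- `l_{X,Y}(x,y,y')` (1-based): the largest `x' ∈ {1,…,|X|}` such that the
substring `X[x+1..x'-1]` is a subsequence of the range `Y[y..y']`.
Here `X[p..q] = (X.take q).drop (p-1)`. -/
noncomputable def lXY {α : Type*} (X Y : List α) (x y y' : ℕ) : ℕ :=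
  sSup {x' | 1 ≤ x' ∧ x' ≤ X.length ∧
    ((X.take (x' - 1)).drop x).Sublist ((Y.take y').drop (y - 1))}

/-- Splitting a sublist of `B ++ [b]`. -/
lemma sublist_snoc_elim {α : Type*} {A B : List α} {b : α} (h : A.Sublist (B ++ [b])) :
    A.Sublist B ∨ ∃ A', A = A' ++ [b] ∧ A'.Sublist B := by
  have h' : A.reverse.Sublist (b :: B.reverse) := by
    simpa using List.reverse_sublist.mpr h
  rcases List.sublist_cons_iff.mp h' with h'' | ⟨r, hr, hrs⟩
  · left
    have := List.reverse_sublist.mpr h''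
    simpa using this
  · right
    refine ⟨r.reverse, ?_, ?_⟩
    · have := congrArg List.reverse hr
      simpa using this
    · have := List.reverse_sublist.mpr hrs
      simpa using this

/-- Recurrence for `l_{X,Y}`: writing `t = l_{X,Y}(x,y,y')`, extending the text
range by the character `Y[y'+1]` increases the value by one exactly when
`t < |X|` and `X[t] = Y[y'+1]` (1-based positions: `X[t] = X[t-1]?` and
`Y[y'+1] = Y[y']?` in 0-based notation); otherwise the value is unchanged. -/
theorem stmt_15 {α : Type*} (X Y : List α) (hX : X ≠ [])
    (x y y' : ℕ) (hx : x ≤ X.length) (hy : 1 ≤ y) (hyy : y ≤ y') (hy' : y' < Y.length) :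
    ((lXY X Y x y y' < X.length ∧ X[lXY X Y x y y' - 1]? = Y[y']?) →
        lXY X Y x y (y' + 1) = lXY X Y x y y' + 1) ∧
    (¬ (lXY X Y x y y' < X.length ∧ X[lXY X Y x y y' - 1]? = Y[y']?) →
        lXY X Y x y (y' + 1) = lXY X Y x y y') := by
  set S : ℕ → Set ℕ := fun z => {x' | 1 ≤ x' ∧ x' ≤ X.length ∧
    ((X.take (x' - 1)).drop x).Sublist ((Y.take z).drop (y - 1))} with hS
  have hXpos : 0 < X.length := List.length_pos_iff.mpr hX
  have hmem1 : ∀ z, 1 ∈ S z := fun z => ⟨le_refl 1, hXpos, by simp⟩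
  have hbdd : ∀ z, BddAbove (S z) := fun z => ⟨X.length, fun a ha => ha.2.1⟩
  have hne : ∀ z, (S z).Nonempty := fun z => ⟨1, hmem1 z⟩
  have htdef : lXY X Y x y y' = sSup (S y') := rfl
  have htdef' : lXY X Y x y (y' + 1) = sSup (S (y' + 1)) := rfl
  set t := sSup (S y') with htS
  have htmem : t ∈ S y' := Nat.sSup_mem (hne y') (hbdd y')
  obtain ⟨ht1, htX, htsub⟩ := htmem
  -- the key equation: the new text range is the old one with `Y[y']` appended
  have hylen : ((Y.take y').length) = y' := by
    simp [List.length_take, Nat.min_eq_left (le_of_lt hy')]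
  have hD : (Y.take (y' + 1)).drop (y - 1) =
      (Y.take y').drop (y - 1) ++ [Y[y']] := by
    rw [List.take_succ]
    rw [List.drop_append]
    have h1 : y - 1 - (Y.take y').length = 0 := by
      rw [hylen]; omega
    rw [h1]
    simp [List.getElem?_eq_getElem hy']
  -- monotonicity
  have hmono : S y' ⊆ S (y' + 1) := by
    rintro a ⟨h1, h2, h3⟩
    exact ⟨h1, h2, by
      rw [hD]
      exact h3.trans (List.sublist_append_left _ _)⟩
  -- key upper-bound fact
  have hkey : ∀ x' ∈ S (y' + 1), x' ≤ t ∨ (x' = t + 1 ∧ X[t - 1]? = Y[y']?) := by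
    rintro x' ⟨h1, h2, h3⟩
    by_cases hle : x' ≤ t
    · exact Or.inl hle
    push_neg at hle
    rw [hD] at h3
    rcases sublist_snoc_elim h3 with h4 | ⟨A', hA', hA's⟩
    · exfalso
      have : x' ≤ t := le_csSup (hbdd y') ⟨h1, h2, h4⟩
      omega
    · -- A' nonempty case analysis
      have hAne : (X.take (x' - 1)).drop x ≠ [] := by
        rw [hA']; simp
      have hlen : x < (X.take (x' - 1)).length := by
        by_contra hc
        push_neg at hc
        exact hAne (List.drop_eq_nil_of_le hc)
      have hx'1 : x' - 1 ≤ X.length := by omega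
      have hlen' : x < x' - 1 := by
        rw [List.length_take] at hlen; omega
      have hx'2 : x' - 2 < X.length := by omega
      have htake : X.take (x' - 1) = X.take (x' - 2) ++ [X[x' - 2]] := by
        have : x' - 1 = (x' - 2) + 1 := by omega
        rw [this, List.take_succ, List.getElem?_eq_getElem hx'2]
        simp
      have hdrop : (X.take (x' - 1)).drop x =
          (X.take (x' - 2)).drop x ++ [X[x' - 2]] := by
        rw [htake, List.drop_append]
        have : x - (X.take (x' - 2)).length = 0 := by
          rw [List.length_take]; omega
        rw [this]; simp
      rw [hdrop] at hA'
      have hinj := List.append_inj hA' (by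
        have := congrArg List.length hA'
        simpa using this)
      have heqA : (X.take (x' - 2)).drop x = A' := hinj.1
      have heqb : X[x' - 2] = Y[y'] := by
        have := hinj.2
        simpa using this
      have hmem' : x' - 1 ∈ S y' := by
        refine ⟨by omega, hx'1, ?_⟩
        have : x' - 1 - 1 = x' - 2 := by omega
        rw [this, heqA]
        exact hA's
      have hle2 : x' - 1 ≤ t := le_csSup (hbdd y') hmem'
      have hx'eq : x' = t + 1 := by omega
      refine Or.inr ⟨hx'eq, ?_⟩
      have ht1' : t - 1 < X.length := by omega
      rw [List.getElem?_eq_getElem ht1', List.getElem?_eq_getElem hy']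
      simp only [show t - 1 = x' - 2 by omega, heqb]
  constructor
  · rintro ⟨htlt, hteq⟩
    rw [htdef] at htlt hteq
    rw [htdef', htdef]
    have hmem : t + 1 ∈ S (y' + 1) := by
      refine ⟨by omega, by omega, ?_⟩
      have ht1' : t - 1 < X.length := by omega
      rw [List.getElem?_eq_getElem ht1', List.getElem?_eq_getElem hy'] at hteq
      have heqb : X[t - 1] = Y[y'] := by simpa using hteq
      have : t + 1 - 1 = t := by omega
      rw [this, hD]
      by_cases hxt : t ≤ x
      · have : (X.take t).drop x = [] :=
          List.drop_eq_nil_of_le (by rw [List.length_take]; omega)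
        rw [this]
        exact List.nil_sublist _
      · push_neg at hxt
        have htake : X.take t = X.take (t - 1) ++ [X[t - 1]] := by
          conv_lhs => rw [show t = (t - 1) + 1 by omega]
          rw [List.take_succ, List.getElem?_eq_getElem ht1']
          simp
        rw [htake, List.drop_append]
        have : x - (X.take (t - 1)).length = 0 := by
          rw [List.length_take]; omega
        rw [this]
        refine List.Sublist.append htsub ?_
        simp [heqb]
    refine le_antisymm ?_ (le_csSup (hbdd _) hmem)
    refine csSup_le (hne _) ?_
    intro a ha
    rcases hkey a ha with h | ⟨h, _⟩ <;> omega
  · intro hneg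
    rw [htdef] at hneg
    rw [htdef', htdef]
    refine le_antisymm ?_ (le_csSup (hbdd _) (hmono ⟨ht1, htX, htsub⟩))
    refine csSup_le (hne _) ?_
    intro a ha
    rcases hkey a ha with h | ⟨h, heq⟩
    · exact h
    · exfalso
      have : a ≤ X.length := ha.2.1
      exact hneg ⟨by omega, heq⟩
end
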